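/- arXiv:1503.02608 — 3 statements merged into one kernel-verified Lean document; each statement's English description precedes it below -/
import Mathlib

section
/- Let λ > 1 and set μ = (λ³ − 1)/(4λ). Then the function U(z) = log(λ + μ|z|²) on ℂ is a supersolution of Wang's equation: ΔU(z) ≤ 4e^{U(z)} − 4e^{−2U(z)} for all z ∈ ℂ, where Δ = 4∂_z∂_{z̄} is the Euclidean Laplacian. -/
/-- The Euclidean Laplacian Δ = ∂²/∂x² + ∂²/∂y² of a function on ℂ ≅ ℝ²,
expressed via iterated directional derivatives in the directions 1 and I. -/
noncomputable def laplacian (f : ℂ → ℝ) (z : ℂ) : ℝ :=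
  fderiv ℝ (fun w => fderiv ℝ f w 1) z 1 +
  fderiv ℝ (fun w => fderiv ℝ f w Complex.I) z Complex.I

/-!
For `D(w) = a + b‖w‖²` on any real inner product space, the second derivative of `log D` in a
direction `v` is `2b‖v‖²/D - (2b⟪w, v⟫/D)²`; summing over `v = 1, I` in `ℂ` gives
`Δ log D = 4ab/D²`. With `a = λ` and `4λμ = λ³ - 1`, the claim `(λ³ - 1)/D² ≤ 4D - 4/D²` is
`λ³ + 3 ≤ 4D³`, which holds because `D ≥ λ > 1`.
-/

open Real RealInnerProductSpace

section
variable {E : Type*} [NormedAddCommGroup E] [InnerProductSpace ℝ E] {a b : ℝ}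

theorem hasFDerivAt_add_mul_norm_sq (x : E) :
    HasFDerivAt (fun y : E => a + b * ‖y‖ ^ 2) (b • 2 • innerSL ℝ x) x :=
  ((hasStrictFDerivAt_norm_sq x).hasFDerivAt.const_mul b).const_add a

theorem fderiv_log_add_mul_norm_sq_apply {x : E} (hx : a + b * ‖x‖ ^ 2 ≠ 0) (v : E) :
    fderiv ℝ (fun y : E => log (a + b * ‖y‖ ^ 2)) x v = 2 * b * ⟪x, v⟫ / (a + b * ‖x‖ ^ 2) := by
  rw [((hasFDerivAt_add_mul_norm_sq x).log hx).fderiv]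
  simp only [smul_apply, coe_innerSL_apply, nsmul_eq_mul, Nat.cast_ofNat, smul_eq_mul]
  ring

theorem fderiv_fderiv_log_add_mul_norm_sq_apply (ha : 0 < a) (hb : 0 ≤ b) (x v : E) :
    fderiv ℝ (fun y : E => fderiv ℝ (fun y : E => log (a + b * ‖y‖ ^ 2)) y v) x v =
      2 * b * ‖v‖ ^ 2 / (a + b * ‖x‖ ^ 2) - (2 * b * ⟪x, v⟫ / (a + b * ‖x‖ ^ 2)) ^ 2 := by
  have hpos : ∀ y : E, 0 < a + b * ‖y‖ ^ 2 := fun y => by positivity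
  have hfirst : (fun y : E => fderiv ℝ (fun y : E => log (a + b * ‖y‖ ^ 2)) y v) =
      fun y => 2 * b * ⟪y, v⟫ * (a + b * ‖y‖ ^ 2)⁻¹ := funext fun y => by
    rw [fderiv_log_add_mul_norm_sq_apply (hpos y).ne', div_eq_mul_inv]
  have hnum : HasFDerivAt (fun y : E => 2 * b * ⟪y, v⟫) ((2 * b) • innerSL ℝ v) x := by
    simpa only [innerSL_apply_apply, real_inner_comm v]
      using ((innerSL ℝ v).hasFDerivAt (x := x)).const_mul (2 * b)
  have hinv : HasFDerivAt (fun y : E => (a + b * ‖y‖ ^ 2)⁻¹) _ x :=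
    (hasDerivAt_inv (hpos x).ne').comp_hasFDerivAt x (hasFDerivAt_add_mul_norm_sq x)
  rw [hfirst, (hnum.fun_mul hinv).fderiv]
  simp only [neg_smul, smul_neg, add_apply, neg_apply, smul_apply, coe_innerSL_apply, nsmul_eq_mul,
    Nat.cast_ofNat, smul_eq_mul, real_inner_self_eq_norm_sq]
  field_simp
  ring

end

theorem laplacian_log_add_mul_norm_sq {a b : ℝ} (ha : 0 < a) (hb : 0 ≤ b) (z : ℂ) :
    laplacian (fun w => log (a + b * ‖w‖ ^ 2)) z = 4 * a * b / (a + b * ‖z‖ ^ 2) ^ 2 := by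
  have hz : a + b * ‖z‖ ^ 2 ≠ 0 := by positivity
  have hre : ⟪z, 1⟫ = z.re := by simp [Complex.inner]
  have him : ⟪z, Complex.I⟫ = z.im := by simp [Complex.inner]
  have hnorm : ‖z‖ ^ 2 = z.re ^ 2 + z.im ^ 2 := by
    rw [Complex.sq_norm, Complex.normSq_apply]; ring
  rw [laplacian, fderiv_fderiv_log_add_mul_norm_sq_apply ha hb,
    fderiv_fderiv_log_add_mul_norm_sq_apply ha hb, hre, him, norm_one, Complex.norm_I]
  field_simp
  rw [hnorm]
  ring

theorem stmt_2 (lam : ℝ) (hlam : 1 < lam) (mu : ℝ) (hmu : mu = (lam ^ 3 - 1) / (4 * lam)) :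
    ∀ z : ℂ,
      laplacian (fun w => Real.log (lam + mu * ‖w‖ ^ 2)) z ≤
        4 * Real.exp (Real.log (lam + mu * ‖z‖ ^ 2)) -
          4 * Real.exp (-2 * Real.log (lam + mu * ‖z‖ ^ 2)) := by
  intro z
  have hlam0 : 0 < lam := one_pos.trans hlam
  have hlam3 : 1 < lam ^ 3 := one_lt_pow₀ hlam (by norm_num)
  have hmu0 : 0 ≤ mu := by rw [hmu]; exact div_nonneg (by linarith) (by positivity)
  rw [laplacian_log_add_mul_norm_sq hlam0 hmu0]
  set D := lam + mu * ‖z‖ ^ 2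
  have hD : lam ≤ D := le_add_of_nonneg_right (by positivity)
  have hD0 : 0 < D := hlam0.trans_le hD
  have hexp : exp (-2 * log D) = (D ^ 2)⁻¹ := by
    rw [mul_comm, ← rpow_def_of_pos hD0, rpow_neg hD0.le, rpow_two]
  have hlam_mu : 4 * lam * mu = lam ^ 3 - 1 := by rw [hmu]; field_simp
  have hcube : lam ^ 3 ≤ D ^ 3 := pow_le_pow_left₀ hlam0.le hD 3
  rw [exp_log hD0, hexp, hlam_mu]
  calc (lam ^ 3 - 1) / D ^ 2 ≤ (4 * D ^ 3 - 4) / D ^ 2 :=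
        div_le_div_of_nonneg_right (by linarith) (by positivity)
    _ = 4 * D - 4 * (D ^ 2)⁻¹ := by field_simp
end

section
/- The map ζ ↦ (e^{2Re ζ}, e^{2Re(ω²ζ)}, e^{2Re(ωζ)}), where ω = e^{2πi/3}, is a bijection from ℂ onto the surface {(x, y, z) ∈ ℝ³ : x, y, z > 0 and xyz = 1}. -/
noncomputable def omega : ℂ := Complex.exp (2 * Real.pi * Complex.I / 3)

lemma omega_re : omega.re = -(1/2) := by
  have : (2 * Real.pi * Complex.I / 3) = ((2 * Real.pi / 3 : ℝ) : ℂ) * Complex.I := by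
    push_cast; ring
  rw [omega, this, Complex.exp_ofReal_mul_I_re]
  have h : 2 * Real.pi / 3 = Real.pi - Real.pi / 3 := by ring
  rw [h, Real.cos_pi_sub, Real.cos_pi_div_three]

lemma omega_im : omega.im = Real.sqrt 3 / 2 := by
  have : (2 * Real.pi * Complex.I / 3) = ((2 * Real.pi / 3 : ℝ) : ℂ) * Complex.I := by
    push_cast; ring
  rw [omega, this, Complex.exp_ofReal_mul_I_im]
  have h : 2 * Real.pi / 3 = Real.pi - Real.pi / 3 := by ring
  rw [h, Real.sin_pi_sub, Real.sin_pi_div_three]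

lemma h3 : Real.sqrt 3 * Real.sqrt 3 = 3 := Real.mul_self_sqrt (by norm_num)

lemma re2 (ζ : ℂ) : (omega ^ 2 * ζ).re = -ζ.re/2 + Real.sqrt 3 / 2 * ζ.im := by
  simp [pow_two, Complex.mul_re, Complex.mul_im, omega_re, omega_im]
  linear_combination (-ζ.re/4) * h3

lemma re1 (ζ : ℂ) : (omega * ζ).re = -ζ.re/2 - Real.sqrt 3 / 2 * ζ.im := by
  simp [Complex.mul_re, omega_re, omega_im]
  ring

theorem stmt_9 :
    Set.BijOn
      (fun ζ : ℂ => (Real.exp (2 * ζ.re), Real.exp (2 * (omega ^ 2 * ζ).re),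
        Real.exp (2 * (omega * ζ).re)))
      Set.univ
      {p : ℝ × ℝ × ℝ | 0 < p.1 ∧ 0 < p.2.1 ∧ 0 < p.2.2 ∧ p.1 * p.2.1 * p.2.2 = 1} := by
  have hs3 : Real.sqrt 3 ≠ 0 := by positivity
  refine ⟨fun ζ _ => ?_, fun ζ _ ζ' _ h => ?_, fun p hp => ?_⟩
  · refine ⟨Real.exp_pos _, Real.exp_pos _, Real.exp_pos _, ?_⟩
    rw [← Real.exp_add, ← Real.exp_add, re1, re2]
    rw [show 2 * ζ.re + 2 * (-ζ.re/2 + Real.sqrt 3 / 2 * ζ.im)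
        + 2 * (-ζ.re/2 - Real.sqrt 3 / 2 * ζ.im) = 0 by ring, Real.exp_zero]
  · simp only [Prod.mk.injEq] at h
    obtain ⟨h1, h2, -⟩ := h
    have e1 := Real.exp_injective h1
    have e2 := Real.exp_injective h2
    rw [re2, re2] at e2
    have hre : ζ.re = ζ'.re := by linarith
    have him : ζ.im = ζ'.im := by
      rw [hre] at e2
      have : Real.sqrt 3 * ζ.im = Real.sqrt 3 * ζ'.im := by linarith
      exact mul_left_cancel₀ hs3 this
    exact Complex.ext hre him
  · obtain ⟨ha, hb, hc, habc⟩ := hp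
    set a := p.1; set b := p.2.1; set c := p.2.2
    have hlog : Real.log a + Real.log b + Real.log c = 0 := by
      have h0 : Real.log (a * b * c) = 0 := by rw [habc, Real.log_one]
      rw [Real.log_mul (by positivity) hc.ne', Real.log_mul ha.ne' hb.ne'] at h0
      linarith
    refine ⟨⟨Real.log a / 2, (Real.log b + Real.log a / 2) / Real.sqrt 3⟩, trivial, ?_⟩
    have hy : Real.sqrt 3 * ((Real.log b + Real.log a / 2) / Real.sqrt 3)
        = Real.log b + Real.log a / 2 := by field_simp
    simp only [re1, re2]
    refine Prod.ext ?_ (Prod.ext ?_ ?_)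
    · show Real.exp (2 * (Real.log a / 2)) = a
      rw [show 2 * (Real.log a / 2) = Real.log a by ring, Real.exp_log ha]
    · show Real.exp _ = b
      rw [show 2 * (-(Real.log a / 2)/2 + Real.sqrt 3 / 2 * ((Real.log b + Real.log a / 2) / Real.sqrt 3))
          = -(Real.log a / 2) + Real.sqrt 3 * ((Real.log b + Real.log a / 2) / Real.sqrt 3) by ring,
        hy, show -(Real.log a / 2) + (Real.log b + Real.log a / 2) = Real.log b by ring,
        Real.exp_log hb]
    · show Real.exp _ = c
      rw [show 2 * (-(Real.log a / 2)/2 - Real.sqrt 3 / 2 * ((Real.log b + Real.log a / 2) / Real.sqrt 3))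
          = -(Real.log a / 2) - Real.sqrt 3 * ((Real.log b + Real.log a / 2) / Real.sqrt 3) by ring,
        hy, show -(Real.log a / 2) - (Real.log b + Real.log a / 2) = Real.log c by linarith,
        Real.exp_log hc]
end

section
/- Let Λ ⊂ ℂ be a lattice (a subgroup generated by two ℝ-linearly independent complex numbers) and let h : ℂ → ℝ be a smooth Λ-periodic function with h > 0 everywhere satisfying (2/h)·∂_z∂_{z̄}(log h) = 1 − 8/h³ on ℂ. Then h ≡ 2. -/
/-- Second derivative at a global max of a C^∞ function on ℝ is nonpositive. -/
lemma second_deriv_nonpos_at_max (g : ℝ → ℝ) (hg : ContDiff ℝ (⊤ : ℕ∞) g)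
    (hmax : ∀ t, g t ≤ g 0) : deriv (deriv g) 0 ≤ 0 := by
  by_contra hcon
  push_neg at hcon
  have hgd : Differentiable ℝ g := hg.differentiable (by simp)
  have hdg : ContDiff ℝ (⊤:ℕ∞) (deriv g) := (contDiff_infty_iff_deriv.mp (hg.of_le (by simp))).2
  have hg'' : HasDerivAt (deriv g) (deriv (deriv g) 0) 0 :=
    ((hdg.differentiable (by simp)) 0).hasDerivAt
  have hd0 : deriv g 0 = 0 :=
    (IsLocalMax.deriv_eq_zero (Filter.Eventually.of_forall hmax))
  rw [hasDerivAt_iff_tendsto_slope] at hg''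
  have hev : ∀ᶠ t in nhdsWithin (0:ℝ) {(0:ℝ)}ᶜ, 0 < slope (deriv g) 0 t :=
    hg''.eventually (eventually_gt_nhds hcon)
  rw [eventually_nhdsWithin_iff, Metric.eventually_nhds_iff] at hev
  obtain ⟨ε, hε, hball⟩ := hev
  have hpos : ∀ x ∈ Set.Ioo (0:ℝ) (ε/2), 0 < deriv g x := by
    intro x hx
    have hx0 : x ≠ 0 := ne_of_gt hx.1
    have hdist : dist x 0 < ε := by
      rw [Real.dist_eq, sub_zero, abs_of_pos hx.1]; linarith [hx.2]
    have hs := hball hdist hx0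
    rw [slope_def_field, hd0, sub_zero, sub_zero, div_pos_iff] at hs
    rcases hs with ⟨h1, _⟩ | ⟨_, h2⟩
    · exact h1
    · linarith [hx.1]
  have hmono := strictMonoOn_of_deriv_pos (convex_Icc (0:ℝ) (ε/2))
    (hgd.continuous.continuousOn) (by rw [interior_Icc]; exact hpos)
  have h01 : (0:ℝ) ∈ Set.Icc (0:ℝ) (ε/2) := ⟨le_refl _, by linarith⟩
  have h02 : ε/2 ∈ Set.Icc (0:ℝ) (ε/2) := ⟨by linarith, le_refl _⟩
  have := hmono h01 h02 (by linarith)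
  linarith [hmax (ε/2)]

lemma second_deriv_nonneg_at_min (g : ℝ → ℝ) (hg : ContDiff ℝ (⊤ : ℕ∞) g)
    (hmin : ∀ t, g 0 ≤ g t) : 0 ≤ deriv (deriv g) 0 := by
  have := second_deriv_nonpos_at_max (fun t => -g t) hg.neg (fun t => neg_le_neg (hmin t))
  have hd : deriv (fun t => -g t) = fun t => -deriv g t := funext fun t => deriv.neg
  rw [hd] at this
  have : -(deriv (deriv g) 0) ≤ 0 := by
    have h2 : deriv (fun t => -deriv g t) 0 = -deriv (deriv g) 0 := deriv.neg
    linarith [h2 ▸ this]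
  linarith

/-- Second directional derivative as deriv-deriv along a line. -/
lemma second_deriv_line (f : ℂ → ℝ) (hf : ContDiff ℝ (⊤ : ℕ∞) f) (z v : ℂ) :
    deriv (deriv (fun t : ℝ => f (z + t • v))) 0 = fderiv ℝ (fun w => fderiv ℝ f w v) z v := by
  have hφ : ∀ t : ℝ, HasDerivAt (fun s : ℝ => z + s • v) v t := fun t => by
    simpa using ((hasDerivAt_id t).smul_const v).const_add z
  have hd1 : ∀ t : ℝ, HasDerivAt (fun s : ℝ => f (z + s • v)) (fderiv ℝ f (z + t • v) v) t :=
    fun t => ((hf.differentiable (by simp) (z + t • v)).hasFDerivAt).comp_hasDerivAt t (hφ t)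
  have hderiv_eq : deriv (fun s : ℝ => f (z + s • v)) = fun t => fderiv ℝ f (z + t • v) v :=
    funext fun t => (hd1 t).deriv
  have hfd : ContDiff ℝ (⊤ : ℕ∞) (fderiv ℝ f) := hf.fderiv_right (by simp)
  have hF : HasFDerivAt (fun w => fderiv ℝ f w v)
      ((ContinuousLinearMap.apply ℝ ℝ v).comp (fderiv ℝ (fderiv ℝ f) z)) z :=
    (ContinuousLinearMap.apply ℝ ℝ v).hasFDerivAt.comp z
      ((hfd.differentiable (by simp) z).hasFDerivAt)
  have hz0 : z + (0:ℝ) • v = z := by simp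
  have hd2 : HasDerivAt (fun t : ℝ => fderiv ℝ f (z + t • v) v)
      ((fderiv ℝ (fderiv ℝ f) z v) v) 0 := by
    have := (hz0 ▸ hF).comp_hasDerivAt 0 (hφ 0)
    simpa [Function.comp_def] using this
  rw [hderiv_eq, hd2.deriv, hF.fderiv]
  simp

lemma laplacian_nonpos_at_max (f : ℂ → ℝ) (hf : ContDiff ℝ (⊤ : ℕ∞) f) (z₀ : ℂ)
    (hmax : ∀ z, f z ≤ f z₀) : laplacian f z₀ ≤ 0 := by
  have key : ∀ v : ℂ, fderiv ℝ (fun w => fderiv ℝ f w v) z₀ v ≤ 0 := by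
    intro v
    rw [← second_deriv_line f hf z₀ v]
    apply second_deriv_nonpos_at_max
    · exact hf.comp ((contDiff_const.add ((contDiff_id).smul contDiff_const)) : ContDiff ℝ (⊤ : ℕ∞) (fun t : ℝ => z₀ + t • v))
    · intro t; simpa using hmax (z₀ + t • v)
  have h1 := key 1
  have h2 := key Complex.I
  unfold laplacian
  linarith

lemma laplacian_nonneg_at_min (f : ℂ → ℝ) (hf : ContDiff ℝ (⊤ : ℕ∞) f) (z₀ : ℂ)
    (hmin : ∀ z, f z₀ ≤ f z) : 0 ≤ laplacian f z₀ := by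
  have key : ∀ v : ℂ, 0 ≤ fderiv ℝ (fun w => fderiv ℝ f w v) z₀ v := by
    intro v
    rw [← second_deriv_line f hf z₀ v]
    apply second_deriv_nonneg_at_min
    · exact hf.comp ((contDiff_const.add ((contDiff_id).smul contDiff_const)) : ContDiff ℝ (⊤ : ℕ∞) (fun t : ℝ => z₀ + t • v))
    · intro t; simpa using hmin (z₀ + t • v)
  have h1 := key 1
  have h2 := key Complex.I
  unfold laplacian
  linarith

lemma span_lemma (a b : ℂ) (hab : LinearIndependent ℝ ![a, b]) :
    ∀ z : ℂ, ∃ s t : ℝ, z = s • a + t • b := by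
  intro z
  have hcard : Fintype.card (Fin 2) = Module.finrank ℝ ℂ := by
    simp [Complex.finrank_real_complex]
  let B := basisOfLinearIndependentOfCardEqFinrank hab hcard
  have hB : ⇑B = ![a, b] := coe_basisOfLinearIndependentOfCardEqFinrank hab hcard
  refine ⟨B.repr z 0, B.repr z 1, ?_⟩
  have := B.sum_repr z
  rw [Fin.sum_univ_two] at this
  have hB0 : B 0 = a := by rw [hB]; rfl
  have hB1 : B 1 = b := by rw [hB]; rfl
  rw [hB0, hB1] at this
  exact this.symm


theorem stmt_17 (a b : ℂ) (hab : LinearIndependent ℝ ![a, b])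
    (h : ℂ → ℝ) (hsmooth : ContDiff ℝ (⊤ : ℕ∞) h) (hpos : ∀ z, 0 < h z)
    (hper : ∀ z : ℂ, ∀ l ∈ AddSubgroup.closure ({a, b} : Set ℂ), h (z + l) = h z)
    (hpde : ∀ z : ℂ,
      (2 / h z) * ((1 / 4) * laplacian (fun w => Real.log (h w)) z) = 1 - 8 / (h z) ^ 3) :
    ∀ z : ℂ, h z = 2 := by
  have hspan := span_lemma a b hab
  set K := (fun p : ℝ × ℝ => p.1 • a + p.2 • b) '' (Set.Icc (0:ℝ) 1 ×ˢ Set.Icc (0:ℝ) 1) with hKdef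
  have hKc : IsCompact K := (isCompact_Icc.prod isCompact_Icc).image (by fun_prop)
  have hKne : K.Nonempty :=
    ⟨(0:ℝ) • a + (0:ℝ) • b, ⟨(0, 0), ⟨⟨le_refl _, zero_le_one⟩, ⟨le_refl _, zero_le_one⟩⟩, rfl⟩⟩
  have hred : ∀ z : ℂ, ∃ w ∈ K, h z = h w := by
    intro z
    obtain ⟨s, t, rfl⟩ := hspan z
    refine ⟨Int.fract s • a + Int.fract t • b,
      ⟨(Int.fract s, Int.fract t),
        ⟨⟨Int.fract_nonneg s, (Int.fract_lt_one s).le⟩,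
         ⟨Int.fract_nonneg t, (Int.fract_lt_one t).le⟩⟩, rfl⟩, ?_⟩
    have hmem : (⌊s⌋ • a + ⌊t⌋ • b : ℂ) ∈ AddSubgroup.closure ({a, b} : Set ℂ) :=
      AddSubgroup.add_mem _
        (AddSubgroup.zsmul_mem _ (AddSubgroup.subset_closure (by simp)) _)
        (AddSubgroup.zsmul_mem _ (AddSubgroup.subset_closure (by simp)) _)
    have hper' := hper (Int.fract s • a + Int.fract t • b) _ hmem
    rw [← hper']
    congr 1
    rw [← Int.cast_smul_eq_zsmul ℝ (⌊s⌋) a, ← Int.cast_smul_eq_zsmul ℝ (⌊t⌋) b,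
      Int.fract, Int.fract]
    module
  obtain ⟨z₀, hz₀K, hz₀max⟩ := hKc.exists_isMaxOn hKne hsmooth.continuous.continuousOn
  obtain ⟨z₁, hz₁K, hz₁min⟩ := hKc.exists_isMinOn hKne hsmooth.continuous.continuousOn
  have hmax : ∀ z, h z ≤ h z₀ := by
    intro z; obtain ⟨w, hw, he⟩ := hred z; rw [he]; exact hz₀max hw
  have hmin : ∀ z, h z₁ ≤ h z := by
    intro z; obtain ⟨w, hw, he⟩ := hred z; rw [he]; exact hz₁min hw
  have hfc : ContDiff ℝ (⊤ : ℕ∞) (fun w => Real.log (h w)) := hsmooth.log (fun z => (hpos z).ne')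
  have hlap0 := laplacian_nonpos_at_max _ hfc z₀
    (fun z => Real.log_le_log (hpos z) (hmax z))
  have hlap1 := laplacian_nonneg_at_min _ hfc z₁
    (fun z => Real.log_le_log (hpos z₁) (hmin z))
  have hH0 : h z₀ ≤ 2 := by
    have hp := hpde z₀
    have hH := hpos z₀
    have h1 : 1 - 8 / (h z₀)^3 ≤ 0 := by
      rw [← hp]
      exact mul_nonpos_of_nonneg_of_nonpos (by positivity) (by linarith)
    have hp3 : 0 < (h z₀)^3 := by positivity
    have h3 : (h z₀)^3 ≤ 8 := by
      have h2 : 1 ≤ 8 / (h z₀)^3 := by linarith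
      calc (h z₀)^3 = 1 * (h z₀)^3 := by ring
        _ ≤ (8 / (h z₀)^3) * (h z₀)^3 := mul_le_mul_of_nonneg_right h2 hp3.le
        _ = 8 := by field_simp
    nlinarith [sq_nonneg (h z₀ - 2), sq_nonneg (h z₀ + 2)]
  have hH1 : 2 ≤ h z₁ := by
    have hp := hpde z₁
    have hH := hpos z₁
    have h1 : 0 ≤ 1 - 8 / (h z₁)^3 := by
      rw [← hp]
      exact mul_nonneg (by positivity) (by linarith)
    have hp3 : 0 < (h z₁)^3 := by positivity
    have h3 : 8 ≤ (h z₁)^3 := by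
      have h2 : 8 / (h z₁)^3 ≤ 1 := by linarith
      calc (8:ℝ) = (8 / (h z₁)^3) * (h z₁)^3 := by field_simp
        _ ≤ 1 * (h z₁)^3 := mul_le_mul_of_nonneg_right h2 hp3.le
        _ = (h z₁)^3 := by ring
    nlinarith [sq_nonneg (h z₁ - 2), sq_nonneg (h z₁ + 2)]
  intro z
  exact le_antisymm (le_trans (hmax z) hH0) (le_trans hH1 (hmin z))
end
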